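/- arXiv:1406.0908 — 2 statements merged into one kernel-verified Lean document; each statement's English description precedes it below -/
import Mathlib

section
/- Let k be a field and let 𝒞 be a k-linear abelian category. Let 0 → E → X → F → 0 be a short exact sequence in 𝒞 which does not split (the monomorphism E → X admits no retraction). Assume: (i) every morphism E → F is zero; (ii) every morphism F → E is zero; (iii) every endomorphism of E is a scalar multiple of the identity of E; (iv) every endomorphism of F is a scalar multiple of the identity of F. Then every endomorphism of X is a scalar multiple of the identity of X. -/
/-!
An endomorphism `φ` of `X` induces an endomorphism `b • 𝟙` of `F`, since `Hom(E, F) = 0`. Then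
`φ - b • 𝟙` factors as `u ≫ f` with `u : X ⟶ E`; the scalar `f ≫ u ∈ End(E)` must vanish, or a
rescaling of `u` would split `f`. So `u` factors through `Hom(F, E) = 0`, and `φ = b • 𝟙`.
-/

open CategoryTheory Limits

namespace CategoryTheory

variable {k : Type*} [Field k] {C : Type*} [Category C] [Preadditive C] [Linear k C]

lemma eq_zero_of_comp_eq_smul_id_of_not_exists_retraction {E X : C} {f : E ⟶ X} {u : X ⟶ E}
    {a : k} (hf : ¬ ∃ r : X ⟶ E, f ≫ r = 𝟙 E) (hu : f ≫ u = a • 𝟙 E) : a = 0 := by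
  by_contra ha
  refine hf ⟨a⁻¹ • u, ?_⟩
  rw [Linear.comp_smul, hu, smul_smul, inv_mul_cancel₀ ha, one_smul]

namespace ShortComplex

variable [Balanced C] {S : ShortComplex C}

lemma Exact.eq_zero_of_comp_f_eq_zero (hS : S.Exact) [Epi S.g] {A : C}
    (hA : ∀ ψ : S.X₃ ⟶ A, ψ = 0) {u : S.X₂ ⟶ A} (hu : S.f ≫ u = 0) : u = 0 := by
  rw [← hS.g_desc u hu, hA (hS.desc u hu), comp_zero]

lemma Exact.exists_sub_smul_id_comp_g_eq_zero (hS : S.Exact) [Epi S.g]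
    (h₁₃ : ∀ ψ : S.X₁ ⟶ S.X₃, ψ = 0) (h₃ : ∀ ψ : S.X₃ ⟶ S.X₃, ∃ b : k, ψ = b • 𝟙 S.X₃)
    (φ : S.X₂ ⟶ S.X₂) : ∃ b : k, (φ - b • 𝟙 S.X₂) ≫ S.g = 0 := by
  have hφ : S.f ≫ φ ≫ S.g = 0 := by rw [← Category.assoc]; exact h₁₃ _
  obtain ⟨b, hb⟩ := h₃ (hS.desc (φ ≫ S.g) hφ)
  refine ⟨b, ?_⟩
  rw [Preadditive.sub_comp, ← hS.g_desc (φ ≫ S.g) hφ, hb, Linear.comp_smul, Linear.smul_comp,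
    Category.comp_id, Category.id_comp, sub_self]

lemma Exact.eq_zero_of_comp_g_eq_zero (hS : S.Exact) [Mono S.f] [Epi S.g]
    (hsplit : ¬ ∃ r : S.X₂ ⟶ S.X₁, S.f ≫ r = 𝟙 S.X₁) (h₃₁ : ∀ ψ : S.X₃ ⟶ S.X₁, ψ = 0)
    (h₁ : ∀ ψ : S.X₁ ⟶ S.X₁, ∃ a : k, ψ = a • 𝟙 S.X₁) {χ : S.X₂ ⟶ S.X₂} (hχ : χ ≫ S.g = 0) :
    χ = 0 := by
  obtain ⟨u, rfl⟩ := hS.lift' χ hχ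
  obtain ⟨a, ha⟩ := h₁ (S.f ≫ u)
  have hfu : S.f ≫ u = 0 := by
    rw [ha, eq_zero_of_comp_eq_smul_id_of_not_exists_retraction hsplit ha, zero_smul]
  rw [hS.eq_zero_of_comp_f_eq_zero h₃₁ hfu, zero_comp]

end ShortComplex

end CategoryTheory

/-- In a `k`-linear abelian category, a non-split extension `0 → E → X → F → 0` with
`Hom(E,F) = Hom(F,E) = 0` and `End(E)`, `End(F)` consisting of scalars has
`End(X)` consisting of scalars. -/
theorem nonsplit_extension_schur
    {k : Type*} [Field k] {C : Type*} [Category C] [Abelian C] [Linear k C]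
    {E X F : C} (f : E ⟶ X) (g : X ⟶ F) (w : f ≫ g = 0)
    (hse : (ShortComplex.mk f g w).ShortExact)
    (hnonsplit : ¬ ∃ r : X ⟶ E, f ≫ r = 𝟙 E)
    (hEF : ∀ φ : E ⟶ F, φ = 0)
    (hFE : ∀ φ : F ⟶ E, φ = 0)
    (hE : ∀ φ : E ⟶ E, ∃ a : k, φ = a • 𝟙 E)
    (hF : ∀ φ : F ⟶ F, ∃ a : k, φ = a • 𝟙 F) :
    ∀ φ : X ⟶ X, ∃ a : k, φ = a • 𝟙 X := by
  intro φ
  have := hse.mono_f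
  have := hse.epi_g
  obtain ⟨b, hb⟩ := hse.exact.exists_sub_smul_id_comp_g_eq_zero hEF hF φ
  exact ⟨b, sub_eq_zero.mp (hse.exact.eq_zero_of_comp_g_eq_zero hnonsplit hFE hE hb)⟩
end

section
/- Let m, M, δ, W be real numbers with 0 < m < M and δ ≥ 0, and set β = (m/(M − m))·δ. If W > 1 + β + √((1 + β)² − m·M), where √ denotes the real square root extended by 0 on negative arguments, then (M/m)·(W/2 − 1 − m²/(2W)) > W/2 − 1 − M²/(2W) + δ. -/
/-!
With `β = (m/(M-m))·δ` the gap between the two sides factors as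
`(M-m)/(2mW) · (W² - 2(1+β)W + mM)`, and the hypothesis on `W` places it beyond the larger
root of this quadratic; `δ ≥ 0` makes that root at least `1`, so `W > 0` and both factors are positive.
-/

theorem sq_sub_two_mul_add_pos_of_add_sqrt_lt {b c x : ℝ} (h : b + √(b ^ 2 - c) < x) :
    0 < x ^ 2 - 2 * b * x + c := by
  have := Real.lt_sq_of_sqrt_lt (lt_sub_iff_add_lt'.mpr h)
  nlinarith

theorem gieseker_gap_eq {m M δ W : ℝ} (hm : m ≠ 0) (hmM : M - m ≠ 0) (hW : W ≠ 0) :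
    (M / m) * (W / 2 - 1 - m ^ 2 / (2 * W)) - (W / 2 - 1 - M ^ 2 / (2 * W) + δ) =
      (M - m) / (2 * m * W) * (W ^ 2 - 2 * (1 + (m / (M - m)) * δ) * W + m * M) := by
  field_simp
  ring

/-- The computational core of the effective Gieseker chamber bound: with
`0 < m < M`, `δ ≥ 0` and `β = (m/(M-m))·δ`, if
`W > 1 + β + √((1+β)² - m·M)` then `(M/m)(W/2 - 1 - m²/(2W)) > W/2 - 1 - M²/(2W) + δ`. -/
theorem gieseker_chamber_inequality
    (m M δ W : ℝ) (hm : 0 < m) (hmM : m < M) (hδ : 0 ≤ δ)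
    (hW : 1 + (m / (M - m)) * δ +
        Real.sqrt ((1 + (m / (M - m)) * δ) ^ 2 - m * M) < W) :
    W / 2 - 1 - M ^ 2 / (2 * W) + δ < (M / m) * (W / 2 - 1 - m ^ 2 / (2 * W)) := by
  have hMm : 0 < M - m := sub_pos.mpr hmM
  have hW_pos : 0 < W := by
    have : 0 ≤ (m / (M - m)) * δ := by positivity
    linarith [Real.sqrt_nonneg ((1 + (m / (M - m)) * δ) ^ 2 - m * M)]
  have hquad := sq_sub_two_mul_add_pos_of_add_sqrt_lt hW
  have hgap := gieseker_gap_eq (δ := δ) hm.ne' hMm.ne' hW_pos.ne'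
  rw [← sub_pos, hgap]
  exact mul_pos (by positivity) hquad
end
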